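/- Let (A_k)_{k≥1} be a sequence of 3×3 real matrices, where A_k has rows (t_k, 0, 0), (−s_k/2, 1/10, 0), (c_k/2, 0, 1/10) with s_k² + c_k² ≤ 1 and t_k ≥ 1. Let 𝒞 = {(v₁,v₂,v₃) ∈ ℝ³ : 2|v₁| ≥ √(v₂² + v₃²)}. Then the sets A_1A_2⋯A_n(𝒞), n ≥ 1, are nested decreasing, and there exist real numbers s₂*, s₃* with (s₂*)² + (s₃*)² ≤ 49/100 such that ⋂_{n≥1} A_1A_2⋯A_n(𝒞) = {(u, s₂*·u, s₃*·u) : u ∈ ℝ}, a one-dimensional linear subspace of ℝ³. -/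

import Mathlib

open Matrix

/-- `matProdL A n = A 1 * A 2 * ⋯ * A n`, with `matProdL A 0 = 1`. -/
def matProdL (A : ℕ → Matrix (Fin 3) (Fin 3) ℝ) : ℕ → Matrix (Fin 3) (Fin 3) ℝ
  | 0 => 1
  | n + 1 => matProdL A n * A (n + 1)

/-- The centre-unstable cone `𝒞 = {v : 2|v₁| ≥ √(v₂² + v₃²)}`. -/
noncomputable def cuCone : Set (Fin 3 → ℝ) :=
  {v | Real.sqrt ((v 1) ^ 2 + (v 2) ^ 2) ≤ 2 * |v 0|}

/-!
Every matrix in sight has the form `triMat T q σ`, which maps `𝒞` onto the round cone of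
aperture `2q/T` around the line through `(1, σ)`. Such matrices are closed under products, the
axis of `A₁⋯Aₙ` being the partial sum `σₙ` of a geometric-type series, and each `A_k` maps `𝒞`
into itself, so the cones `A₁⋯Aₙ(𝒞)` are nested. Hence the limit axis `τ` lies in all of them,
and since the apertures tend to zero the intersection is the line through `(1, τ)`. Finally
`‖τ‖ ≤ ‖σ₁‖ + 2/10 ≤ 1/2 + 1/5 = 7/10`.
-/

open Filter Topology Finset

local notation "E²" => EuclideanSpace ℝ (Fin 2)

lemma norm_toLp_fin_two (a b : ℝ) : ‖!₂[a, b]‖ = Real.sqrt (a ^ 2 + b ^ 2) := by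
  simp [EuclideanSpace.norm_eq, Fin.sum_univ_two]

lemma matProdL_image_antitone {A : ℕ → Matrix (Fin 3) (Fin 3) ℝ} {S : Set (Fin 3 → ℝ)}
    (hA : ∀ k, 1 ≤ k → (A k).mulVec '' S ⊆ S) :
    Antitone fun n => (matProdL A n).mulVec '' S := by
  refine antitone_nat_of_succ_le fun n => ?_
  calc (matProdL A (n + 1)).mulVec '' S
      = (matProdL A n).mulVec '' ((A (n + 1)).mulVec '' S) := by
        rw [Set.image_image]; simp only [matProdL, mulVec_mulVec]
    _ ⊆ (matProdL A n).mulVec '' S := Set.image_mono (hA _ n.succ_pos)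

/-- The round cone of aperture `r` around the line spanned by `![1, σ 0, σ 1]`. -/
def roundCone (σ : E²) (r : ℝ) : Set (Fin 3 → ℝ) :=
  {w | ‖!₂[w 1, w 2] - w 0 • σ‖ ≤ r * |w 0|}

lemma cuCone_eq_roundCone : cuCone = roundCone 0 2 := by
  ext v; simp [cuCone, roundCone, norm_toLp_fin_two]

lemma roundCone_subset_roundCone {σ σ' : E²} {r r' : ℝ} (h : ‖σ - σ'‖ + r ≤ r') :
    roundCone σ r ⊆ roundCone σ' r' := by
  intro w (hw : ‖_‖ ≤ _)
  show ‖_‖ ≤ _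
  calc ‖!₂[w 1, w 2] - w 0 • σ'‖ = ‖(!₂[w 1, w 2] - w 0 • σ) + w 0 • (σ - σ')‖ := by
        rw [smul_sub, sub_add_sub_cancel]
    _ ≤ r * |w 0| + |w 0| * ‖σ - σ'‖ := by
        grw [norm_add_le, hw, norm_smul, Real.norm_eq_abs]
    _ ≤ r' * |w 0| := by nlinarith [abs_nonneg (w 0)]

lemma roundCone_zero_eq_range (σ : E²) :
    roundCone σ 0 = Set.range fun u : ℝ => ![u, σ 0 * u, σ 1 * u] := by
  ext w
  simp only [roundCone, zero_mul, norm_le_zero_iff, sub_eq_zero, Set.mem_ofPred_eq, Set.mem_range]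
  constructor
  · intro h
    refine ⟨w 0, funext fun i => ?_⟩
    fin_cases i
    · rfl
    · simpa [mul_comm] using (congrArg (· 0) h).symm
    · simpa [mul_comm] using (congrArg (· 1) h).symm
  · rintro ⟨u, rfl⟩
    ext i; fin_cases i <;> simp [mul_comm]

def triMat (T q : ℝ) (σ : E²) : Matrix (Fin 3) (Fin 3) ℝ :=
  !![T, 0, 0; T * σ 0, q, 0; T * σ 1, 0, q]

lemma triMat_mul {T T' q q' : ℝ} (σ σ' : E²) (hT : T ≠ 0) :
    triMat T q σ * triMat T' q' σ' = triMat (T * T') (q * q') (σ + (q / T) • σ') := by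
  ext i j
  fin_cases i <;> fin_cases j <;> simp [triMat, mul_apply, Fin.sum_univ_three] <;>
    field_simp

lemma triMat_mulVec_zero (T q : ℝ) (σ : E²) (v : Fin 3 → ℝ) :
    (triMat T q σ *ᵥ v) 0 = T * v 0 := by
  simp [triMat, mulVec, dotProduct, Fin.sum_univ_three]

lemma triMat_mulVec_transverse (T q : ℝ) (σ : E²) (v : Fin 3 → ℝ) :
    !₂[(triMat T q σ *ᵥ v) 1, (triMat T q σ *ᵥ v) 2] = (T * v 0) • σ + q • !₂[v 1, v 2] := by
  ext i; fin_cases i <;> simp [triMat, mulVec, dotProduct, Fin.sum_univ_three] <;> ring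

lemma image_triMat_cuCone {T q : ℝ} (σ : E²) (hT : 0 < T) (hq : 0 < q) :
    (triMat T q σ).mulVec '' cuCone = roundCone σ (2 * q / T) := by
  rw [cuCone_eq_roundCone]
  ext w
  constructor
  · rintro ⟨v, hv : ‖_‖ ≤ _, rfl⟩
    show ‖_‖ ≤ _
    rw [triMat_mulVec_transverse, triMat_mulVec_zero, add_sub_cancel_left, norm_smul,
      Real.norm_of_nonneg hq.le, abs_mul, abs_of_pos hT, smul_zero, sub_zero] at *
    calc q * ‖!₂[v 1, v 2]‖ ≤ q * (2 * |v 0|) := by gcongr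
      _ = 2 * q / T * (T * |v 0|) := by field_simp
  · intro (hw : ‖_‖ ≤ _)
    refine ⟨![w 0 / T, (w 1 - w 0 * σ 0) / q, (w 2 - w 0 * σ 1) / q], ?_, ?_⟩
    · show ‖_‖ ≤ _
      have htr : !₂[(w 1 - w 0 * σ 0) / q, (w 2 - w 0 * σ 1) / q]
          = q⁻¹ • (!₂[w 1, w 2] - w 0 • σ) := by
        ext i; fin_cases i <;> simp [div_eq_inv_mul]
      simp only [Matrix.cons_val_zero, Matrix.cons_val_one, Matrix.cons_val_two, Matrix.head_cons,
        Matrix.tail_cons, smul_zero, sub_zero, htr, norm_smul, norm_inv, Real.norm_of_nonneg hq.le,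
        abs_div, abs_of_pos hT]
      calc q⁻¹ * ‖!₂[w 1, w 2] - w 0 • σ‖ ≤ q⁻¹ * (2 * q / T * |w 0|) := by gcongr
        _ = 2 * (|w 0| / T) := by field_simp
    · ext i
      fin_cases i <;> simp [triMat, mulVec, dotProduct, Fin.sum_univ_three] <;> field_simp <;> ring

lemma image_triMat_cuCone_subset {T q : ℝ} {σ : E²} (hT : 1 ≤ T) (hq : 0 < q)
    (h : ‖σ‖ + 2 * q ≤ 2) : (triMat T q σ).mulVec '' cuCone ⊆ cuCone := by
  rw [image_triMat_cuCone σ (zero_lt_one.trans_le hT) hq, cuCone_eq_roundCone]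
  refine roundCone_subset_roundCone ?_
  linarith [sub_zero σ ▸ h, div_le_self (by positivity : 0 ≤ 2 * q) hT]

lemma matrix_eq_triMat {T q : ℝ} (a b : ℝ) (hT : T ≠ 0) :
    !![T, 0, 0; -a / 2, q, 0; b / 2, 0, q] = triMat T q ((2 * T)⁻¹ • !₂[-a, b]) := by
  ext i j; fin_cases i <;> fin_cases j <;> simp [triMat] <;> field_simp

lemma norm_smul_toLp_le_half {T a b : ℝ} (hT : 1 ≤ T) (hab : a ^ 2 + b ^ 2 ≤ 1) :
    ‖(2 * T)⁻¹ • !₂[-a, b]‖ ≤ 1 / 2 := by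
  have h2T : 0 < 2 * T := by linarith
  rw [norm_smul, norm_toLp_fin_two, neg_sq, Real.norm_of_nonneg (inv_pos.2 h2T).le]
  calc (2 * T)⁻¹ * √(a ^ 2 + b ^ 2) ≤ (2 * T)⁻¹ * 1 := by gcongr; exact Real.sqrt_le_one.mpr hab
    _ ≤ 1 / 2 := by rw [mul_one, one_div]; exact inv_anti₀ two_pos (by linarith)

lemma sq_add_sq_le_of_norm_le {τ : E²} {ρ : ℝ} (h : ‖τ‖ ≤ ρ) : τ 0 ^ 2 + τ 1 ^ 2 ≤ ρ ^ 2 := by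
  rw [← Fin.sum_univ_two (fun i => τ i ^ 2), ← EuclideanSpace.real_norm_sq_eq]
  exact pow_le_pow_left₀ (norm_nonneg τ) h 2

def stretch (t : ℕ → ℝ) (n : ℕ) : ℝ := ∏ k ∈ range n, t (k + 1)

noncomputable def axisSum (q : ℝ) (t : ℕ → ℝ) (δ : ℕ → E²) (n : ℕ) : E² :=
  ∑ k ∈ range n, (q ^ k / stretch t k) • δ (k + 1)

lemma one_le_stretch {t : ℕ → ℝ} (ht : ∀ k, 1 ≤ k → 1 ≤ t k) (n : ℕ) : 1 ≤ stretch t n :=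
  one_le_prod fun k _ => ht (k + 1) k.succ_pos

lemma stretch_pos {t : ℕ → ℝ} (ht : ∀ k, 1 ≤ k → 1 ≤ t k) (n : ℕ) : 0 < stretch t n :=
  zero_lt_one.trans_le (one_le_stretch ht n)

lemma tendsto_aperture {q : ℝ} {t : ℕ → ℝ} (hq₀ : 0 ≤ q) (hq₁ : q < 1)
    (ht : ∀ k, 1 ≤ k → 1 ≤ t k) : Tendsto (fun n => 2 * q ^ n / stretch t n) atTop (𝓝 0) :=
  squeeze_zero (fun n => div_nonneg (by positivity) (stretch_pos ht n).le)
    (fun n => div_le_self (by positivity) (one_le_stretch ht n))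
    (by simpa using (tendsto_pow_atTop_nhds_zero_of_lt_one hq₀ hq₁).const_mul 2)

lemma matProdL_eq_triMat {A : ℕ → Matrix (Fin 3) (Fin 3) ℝ} {t : ℕ → ℝ} {q : ℝ} {δ : ℕ → E²}
    (hA : ∀ k, 1 ≤ k → A k = triMat (t k) q (δ k)) (ht : ∀ k, 1 ≤ k → 1 ≤ t k) (n : ℕ) :
    matProdL A n = triMat (stretch t n) (q ^ n) (axisSum q t δ n) := by
  induction n with
  | zero =>
    ext i j; fin_cases i <;> fin_cases j <;> simp [matProdL, triMat, stretch, axisSum]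
  | succ n ih =>
    rw [matProdL, ih, hA (n + 1) n.succ_pos,
      triMat_mul _ _ (stretch_pos ht n).ne']
    simp [stretch, axisSum, prod_range_succ, sum_range_succ, pow_succ]

lemma exists_tendsto_axisSum {q B : ℝ} {t : ℕ → ℝ} {δ : ℕ → E²} (hq₀ : 0 ≤ q) (hq₁ : q < 1)
    (ht : ∀ k, 1 ≤ k → 1 ≤ t k) (hδ : ∀ k, 1 ≤ k → ‖δ k‖ ≤ B) :
    ∃ τ, Tendsto (axisSum q t δ) atTop (𝓝 τ) := by
  have hsum : Summable fun k => (q ^ k / stretch t k) • δ (k + 1) := by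
    refine .of_norm_bounded ((summable_geometric_of_lt_one hq₀ hq₁).mul_left B) fun k => ?_
    have h1 := one_le_stretch ht k
    rw [norm_smul, Real.norm_of_nonneg (by positivity), mul_comm B]
    exact mul_le_mul (div_le_self (by positivity) h1) (hδ _ k.succ_pos) (norm_nonneg _)
      (by positivity)
  exact ⟨_, hsum.hasSum.tendsto_sum_nat⟩

lemma norm_sub_le_of_antitone_roundCone {σ : ℕ → E²} {r : ℕ → ℝ} {τ : E²} (hr : ∀ n, 0 ≤ r n)
    (hanti : Antitone fun n => roundCone (σ n) (r n)) (hτ : Tendsto σ atTop (𝓝 τ)) (m : ℕ) :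
    ‖τ - σ m‖ ≤ r m := by
  refine le_of_tendsto (hτ.sub_const (σ m)).norm (eventually_ge_atTop m |>.mono fun n hn => ?_)
  have heta : !₂[σ n 0, σ n 1] = σ n := by ext i; fin_cases i <;> rfl
  have hmem : ![1, σ n 0, σ n 1] ∈ roundCone (σ n) (r n) := by simp [roundCone, heta, hr n]
  simpa [roundCone, heta] using hanti hn hmem

lemma iInter_roundCone_eq {σ : ℕ → E²} {r : ℕ → ℝ} {τ : E²} (N : ℕ)
    (hr : Tendsto r atTop (𝓝 0)) (hτ : ∀ n, ‖τ - σ n‖ ≤ r n) :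
    ⋂ (n : ℕ) (_ : N ≤ n), roundCone (σ n) (r n) = roundCone τ 0 := by
  refine Set.Subset.antisymm (fun w hw => ?_)
    (Set.subset_iInter₂ fun n _ => roundCone_subset_roundCone (by simpa using hτ n))
  simp only [Set.mem_iInter] at hw
  show ‖_‖ ≤ 0 * |w 0|
  refine ge_of_tendsto (by simpa using (hr.const_mul 2).mul_const |w 0|) ?_
  filter_upwards [eventually_ge_atTop N] with n hn
  have hτn : ‖σ n - τ‖ + r n ≤ 2 * r n := by rw [norm_sub_rev]; linarith [hτ n]
  exact roundCone_subset_roundCone hτn (hw n hn)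

theorem nested_cones_line
    (A : ℕ → Matrix (Fin 3) (Fin 3) ℝ) (t s c : ℕ → ℝ)
    (hA : ∀ k, 1 ≤ k → A k = !![t k, 0, 0; -(s k)/2, 1/10, 0; (c k)/2, 0, 1/10])
    (hsc : ∀ k, 1 ≤ k → (s k) ^ 2 + (c k) ^ 2 ≤ 1)
    (ht : ∀ k, 1 ≤ k → 1 ≤ t k) :
    (∀ m n : ℕ, 1 ≤ m → m ≤ n →
      (matProdL A n).mulVec '' cuCone ⊆ (matProdL A m).mulVec '' cuCone) ∧
    ∃ s₂ s₃ : ℝ, s₂ ^ 2 + s₃ ^ 2 ≤ 49/100 ∧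
      (⋂ (n : ℕ) (_ : 1 ≤ n), (matProdL A n).mulVec '' cuCone)
        = Set.range (fun u : ℝ => ![u, s₂ * u, s₃ * u]) := by
  set δ : ℕ → E² := fun k => (2 * t k)⁻¹ • !₂[-s k, c k]
  have hA' : ∀ k, 1 ≤ k → A k = triMat (t k) (1 / 10) (δ k) := fun k hk =>
    (hA k hk).trans (matrix_eq_triMat _ _ (zero_lt_one.trans_le (ht k hk)).ne')
  have hδ : ∀ k, 1 ≤ k → ‖δ k‖ ≤ 1 / 2 := fun k hk => norm_smul_toLp_le_half (ht k hk) (hsc k hk)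
  set σ := axisSum (1 / 10) t δ
  set r : ℕ → ℝ := fun n => 2 * (1 / 10) ^ n / stretch t n
  have himg : ∀ n, (matProdL A n).mulVec '' cuCone = roundCone (σ n) (r n) := fun n => by
    rw [matProdL_eq_triMat hA' ht n, image_triMat_cuCone _ (stretch_pos ht n) (by positivity)]
  have hanti : Antitone fun n => (matProdL A n).mulVec '' cuCone :=
    matProdL_image_antitone fun k hk => hA' k hk ▸
      image_triMat_cuCone_subset (ht k hk) (by norm_num) (by linarith [hδ k hk])
  obtain ⟨τ, hτ⟩ := exists_tendsto_axisSum (q := 1 / 10) (by norm_num) (by norm_num) ht hδ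
  have hτr : ∀ n, ‖τ - σ n‖ ≤ r n :=
    norm_sub_le_of_antitone_roundCone (fun n => div_nonneg (by positivity) (stretch_pos ht n).le)
      (by simpa only [himg] using hanti) hτ
  refine ⟨fun m n _ hmn => hanti hmn, τ 0, τ 1, ?_, ?_⟩
  · have hτ_norm : ‖τ‖ ≤ 7 / 10 := calc
      ‖τ‖ ≤ ‖σ 1‖ + ‖τ - σ 1‖ := norm_le_norm_add_norm_sub' τ (σ 1)
      _ ≤ 1 / 2 + 2 * (1 / 10) ^ 1 := add_le_add (by simpa [σ, axisSum, stretch] using hδ 1 le_rfl)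
          ((hτr 1).trans (div_le_self (by norm_num) (one_le_stretch ht 1)))
      _ = 7 / 10 := by norm_num
    exact (sq_add_sq_le_of_norm_le hτ_norm).trans_eq (by norm_num)
  · simp only [himg]
    rw [iInter_roundCone_eq 1 (tendsto_aperture (by norm_num) (by norm_num) ht) hτr,
      roundCone_zero_eq_range]
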